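/- arXiv:1511.00939 — 3 statements merged into one kernel-verified Lean document; each statement's English description precedes it below -/
import Mathlib

section
/- Let Λ be a nonempty finite set and let X ⊆ Λ^ℕ be a subshift. The following are equivalent: (i) the follower set F_α is open in X for every finite word α ∈ Λ*; (ii) the follower set F_a is open in X for every letter a ∈ Λ; (iii) the restriction of the shift map S to X is an open mapping from X to X; (iv) X is a subshift of finite type. -/
/-! The shift maps `Z_a ∩ U` onto `F_a ∩ (a·)⁻¹ U`, so the shift is open exactly when every `F_a`
is relatively open. For a subshift of finite type, whether `y ∈ X` lies in `F_α` is decided by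
finitely many conditions on the first letters of `y` (no forbidden word may straddle `α` and `y`),
so `F_α` is open. Conversely, each `F_a` is relatively clopen in the compact space `X`, so a
Lebesgue number gives `N` such that membership of `y ∈ X` in every `F_a` depends only on the first
`N` letters of `y`. Then `X` is cut out by forbidding the words of length `N + 1` outside its
language: a sequence all of whose `(N + 1)`-blocks occur in `X` is approximated by points of `X`
built from right to left, a letter `a` at a time, which is allowed because `F_a` sees only `N`
letters. -/

open scoped Classical

namespace SubshiftPaper

variable {Λ : Type}

/-- The left shift on infinite words. -/
def shiftMap (x : ℕ → Λ) : ℕ → Λ := fun n => x (n + 1)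

/-- Concatenation of a finite word with an infinite word. -/
def cat (α : List Λ) (y : ℕ → Λ) : ℕ → Λ := fun n => α.getD n (y (n - α.length))

/-- `α` is a prefix of the infinite word `x`. -/
def Pref (α : List Λ) (x : ℕ → Λ) : Prop := ∀ (i : ℕ) (h : i < α.length), x i = α[i]

/-- The tail of `x` after `n` letters. -/
def tail (x : ℕ → Λ) (n : ℕ) : ℕ → Λ := fun i => x (n + i)

/-- `α` occurs in `x` at position `n`. -/
def OccursAt (α : List Λ) (x : ℕ → Λ) (n : ℕ) : Prop :=
  ∀ (i : ℕ) (h : i < α.length), x (n + i) = α[i]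

/-- `α` occurs in `x` (as a contiguous block of letters). -/
def Occurs (α : List Λ) (x : ℕ → Λ) : Prop := ∃ n, OccursAt α x n

/-- `X` is a subshift: a nonempty closed shift-invariant subset. -/
def IsSubshift [TopologicalSpace Λ] (X : Set (ℕ → Λ)) : Prop :=
  X.Nonempty ∧ IsClosed X ∧ ∀ x ∈ X, shiftMap x ∈ X

/-- The set of infinite words avoiding all words in `F`. -/
def ForbidSpace (F : Set (List Λ)) : Set (ℕ → Λ) := {x | ∀ α ∈ F, ¬ Occurs α x}

/-- `X` is a subshift of finite type. -/
def IsSFT (X : Set (ℕ → Λ)) : Prop := ∃ F : Set (List Λ), F.Finite ∧ X = ForbidSpace F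

/-- The follower set of a finite word. -/
def follower (X : Set (ℕ → Λ)) (α : List Λ) : Set (ℕ → Λ) := {y | y ∈ X ∧ cat α y ∈ X}

/-- The cylinder of a finite word. -/
def cylinder (X : Set (ℕ → Λ)) (α : List Λ) : Set (ℕ → Λ) := {x | x ∈ X ∧ Pref α x}

/-- The language of `X`. -/
def Language (X : Set (ℕ → Λ)) : Set (List Λ) := {α | ∃ x ∈ X, Occurs α x}

/-- The embedding of finite words into the free group. -/
def wd (α : List Λ) : FreeGroup Λ := (α.map FreeGroup.of).prod

/-- Indicator function of a set of group elements. -/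
noncomputable def chi (s : Set (FreeGroup Λ)) : FreeGroup Λ → Bool :=
  fun g => if g ∈ s then true else false

/-- The set `ξ_x ⊆ 𝔽`. -/
def xiSet [DecidableEq Λ] (X : Set (ℕ → Λ)) (x : ℕ → Λ) : Set (FreeGroup Λ) :=
  {g | ∃ α β : List Λ, g = wd α * (wd β)⁻¹ ∧
        FreeGroup.norm g = α.length + β.length ∧
        Pref α x ∧ tail x α.length ∈ follower X α ∩ follower X β}

/-- `ξ_x` as an element of `2^𝔽`. -/
noncomputable def xiB [DecidableEq Λ] (X : Set (ℕ → Λ)) (x : ℕ → Λ) : FreeGroup Λ → Bool :=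
  chi (xiSet X x)

/-- The spectrum `Ω_X`: the closure of `{ξ_x : x ∈ X}` in `2^𝔽`. -/
noncomputable def Omega [DecidableEq Λ] (X : Set (ℕ → Λ)) : Set (FreeGroup Λ → Bool) :=
  closure ((fun x => xiB X x) '' X)

/-- Left translation of an element of `2^𝔽`. -/
def translate (g : FreeGroup Λ) (ξ : FreeGroup Λ → Bool) : FreeGroup Λ → Bool :=
  fun h => ξ (g⁻¹ * h)

/-- `x` is the stem of `ξ`: `ξ ∩ 𝔽₊` is exactly the set of prefixes of `x`. -/
def IsStem (ξ : FreeGroup Λ → Bool) (x : ℕ → Λ) : Prop :=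
  {g | ξ g = true} ∩ {g | ∃ α : List Λ, g = wd α} =
    {g | ∃ α : List Λ, g = wd α ∧ Pref α x}

/-- `x` is the stem of `ξ` at `g`: `ξ ∩ g𝔽₊ = {gα : α is a prefix of x}`. -/
def IsStemAt (ξ : FreeGroup Λ → Bool) (g : FreeGroup Λ) (x : ℕ → Λ) : Prop :=
  {h | ξ h = true} ∩ {h | ∃ α : List Λ, h = g * wd α} =
    {h | ∃ α : List Λ, h = g * wd α ∧ Pref α x}

/-- The orbit of `ξ` under the spectral partial action. -/
def Orbit (ξ : FreeGroup Λ → Bool) : Set (FreeGroup Λ → Bool) :=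
  {η | ∃ g : FreeGroup Λ, ξ g⁻¹ = true ∧ η = translate g ξ}

/-- Topological freeness of the spectral partial action. -/
noncomputable def TopFree [DecidableEq Λ] (X : Set (ℕ → Λ)) : Prop :=
  ∀ g : FreeGroup Λ, g ≠ 1 →
    ∀ U : Set (FreeGroup Λ → Bool), IsOpen U →
      (U ∩ Omega X ⊆ {ξ | ξ g⁻¹ = true ∧ translate g ξ = ξ}) → U ∩ Omega X = ∅

/-- The periodic infinite word `γ^∞`. -/
noncomputable def perInf [Nonempty Λ] (γ : List Λ) : ℕ → Λ :=
  fun n => γ.getD (n % γ.length) (Classical.arbitrary Λ)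

/-- `n`-fold concatenation of a finite word with itself. -/
def rep : ℕ → List Λ → List Λ
  | 0, _ => []
  | n + 1, γ => γ ++ rep n γ

/-- `γ` is a circuit relative to `X`. -/
noncomputable def IsCircuit [Nonempty Λ] (X : Set (ℕ → Λ)) (γ : List Λ) : Prop :=
  γ ≠ [] ∧ perInf γ ∈ X

/-- `y` is an exit for the circuit `γ`. -/
noncomputable def IsExit [Nonempty Λ] (X : Set (ℕ → Λ)) (γ : List Λ) (y : ℕ → Λ) : Prop :=
  y ≠ perInf γ ∧ cat γ y ∈ X

/-- `z` is a strong exit for the circuit `γ`. -/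
noncomputable def IsStrongExit [Nonempty Λ] (X : Set (ℕ → Λ)) (γ : List Λ) (z : ℕ → Λ) : Prop :=
  z ≠ perInf γ ∧ ∀ n : ℕ, cat (rep n γ) z ∈ X

/-- The sets `X_g` of the standard partial action. -/
def Xg [DecidableEq Λ] (X : Set (ℕ → Λ)) (g : FreeGroup Λ) : Set (ℕ → Λ) :=
  {x | ∃ α β : List Λ, g = wd α * (wd β)⁻¹ ∧
        FreeGroup.norm g = α.length + β.length ∧
        ∃ y ∈ follower X α ∩ follower X β, x = cat α y}

/-- `x` is a fixed point for `θ_g`. -/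
def IsThetaFixed [DecidableEq Λ] (X : Set (ℕ → Λ)) (g : FreeGroup Λ) (x : ℕ → Λ) : Prop :=
  ∃ α β : List Λ, g = wd α * (wd β)⁻¹ ∧
    FreeGroup.norm g = α.length + β.length ∧
    ∃ y ∈ follower X α ∩ follower X β, x = cat β y ∧ cat α y = x

/-- `x` may be collectively reached from the finite set `B`. -/
def CollReached (X : Set (ℕ → Λ)) (B : Finset (List Λ)) (x : ℕ → Λ) : Prop :=
  ∃ α γ : List Λ, Pref α x ∧ ∀ β ∈ B, cat (β ++ γ) (tail x α.length) ∈ X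

/-- `X` is collectively cofinal. -/
def CollCofinal (X : Set (ℕ → Λ)) : Prop :=
  ∀ B : Finset (List Λ), ↑B ⊆ Language X → (⋂ β ∈ B, follower X β).Nonempty →
    ∀ x ∈ X, CollReached X B x

/-- `X` is strongly cofinal. -/
def StrongCofinal (X : Set (ℕ → Λ)) : Prop :=
  ∀ β ∈ Language X, ∃ M : ℕ, ∀ x ∈ X, ∃ α γ : List Λ, Pref α x ∧
    cat (β ++ γ) (tail x α.length) ∈ X ∧ α.length + γ.length ≤ M

/-- The even shift. -/
def evenShift : Set (ℕ → Fin 2) :=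
  ForbidSpace {w | ∃ n : ℕ, w = 0 :: (List.replicate (2 * n + 1) 1 ++ [0])}

section Words

variable {Λ : Type}

lemma cat_singleton_succ (a : Λ) (y : ℕ → Λ) (n : ℕ) : cat [a] y (n + 1) = y n := rfl

lemma shiftMap_cat_singleton (a : Λ) (y : ℕ → Λ) : shiftMap (cat [a] y) = y := rfl

lemma cat_singleton_shiftMap (x : ℕ → Λ) : cat [x 0] (shiftMap x) = x := by
  funext n
  cases n <;> rfl

lemma cat_apply_of_length_le (α : List Λ) (y : ℕ → Λ) {n : ℕ} (hn : α.length ≤ n) :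
    cat α y n = y (n - α.length) :=
  List.getD_eq_default α _ hn

lemma OccursAt.of_cat {w α : List Λ} {y : ℕ → Λ} {n : ℕ} (h : OccursAt w (cat α y) n)
    (hn : α.length ≤ n) : OccursAt w y (n - α.length) := fun i hi => by
  rw [← h i hi, cat_apply_of_length_le α y (by omega)]
  congr 1
  omega

lemma tail_zero (x : ℕ → Λ) : tail x 0 = x := by
  funext i
  simp [tail]

lemma tail_eq_iterate (x : ℕ → Λ) (n : ℕ) : tail x n = shiftMap^[n] x := by
  induction n with
  | zero => exact tail_zero x
  | succ n ih =>
    rw [Function.iterate_succ_apply', ← ih]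
    funext i
    simp only [tail, shiftMap]
    congr 1
    omega

lemma tail_mem {X : Set (ℕ → Λ)} (hS : Set.MapsTo shiftMap X X) {x : ℕ → Λ} (hx : x ∈ X)
    (n : ℕ) : tail x n ∈ X := by
  rw [tail_eq_iterate]
  exact hS.iterate n hx

lemma image_shiftMap_inter {X : Set (ℕ → Λ)} (hS : Set.MapsTo shiftMap X X) (U : Set (ℕ → Λ)) :
    shiftMap '' (U ∩ X) = ⋃ a, follower X [a] ∩ cat [a] ⁻¹' U := by
  ext y
  simp only [Set.mem_image, Set.mem_iUnion, Set.mem_inter_iff, Set.mem_preimage]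
  constructor
  · rintro ⟨x, ⟨hxU, hxX⟩, rfl⟩
    refine ⟨x 0, ⟨hS hxX, ?_⟩, ?_⟩ <;> rwa [cat_singleton_shiftMap]
  · rintro ⟨a, ⟨-, hyX⟩, hyU⟩
    exact ⟨cat [a] y, ⟨hyU, hyX⟩, shiftMap_cat_singleton a y⟩

lemma follower_singleton_eq_image {X : Set (ℕ → Λ)} (hS : Set.MapsTo shiftMap X X) (a : Λ) :
    follower X [a] = shiftMap '' ({x | x 0 = a} ∩ X) := by
  rw [image_shiftMap_inter hS]
  ext y
  simp only [Set.mem_iUnion, Set.mem_inter_iff, Set.mem_preimage, Set.mem_ofPred_eq]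
  exact ⟨fun hy => ⟨a, hy, rfl⟩, fun ⟨b, hy, hba⟩ => hba ▸ hy⟩

lemma follower_forbidSpace (F : Set (List Λ)) (α : List Λ) :
    follower (ForbidSpace F) α =
      (⋂ w ∈ F, ⋂ n ∈ Finset.range α.length, cat α ⁻¹' {x | OccursAt w x n}ᶜ) ∩
        ForbidSpace F := by
  ext y
  simp only [follower, ForbidSpace, Occurs, Set.mem_ofPred_eq, Set.mem_inter_iff,
    Set.mem_iInter, Set.mem_preimage, Set.mem_compl_iff, Finset.mem_range, not_exists]
  constructor
  · rintro ⟨hy, hαy⟩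
    exact ⟨fun w hw n _ => hαy w hw n, hy⟩
  · rintro ⟨hαy, hy⟩
    refine ⟨hy, fun w hw n hocc => ?_⟩
    by_cases hn : n < α.length
    · exact hαy w hw n hn hocc
    · exact hy w hw _ (hocc.of_cat (not_lt.mp hn))

end Words

section Topology

variable {Λ : Type} [TopologicalSpace Λ]

lemma continuous_cat (α : List Λ) : Continuous (cat α) := by
  refine continuous_pi fun n => ?_
  by_cases hn : n < α.length
  · simp only [cat, List.getD_eq_getElem α _ hn]
    exact continuous_const
  · simp only [cat, List.getD_eq_default α _ (not_lt.mp hn)]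
    exact continuous_apply _

lemma isClosed_setOf_occursAt [T1Space Λ] (w : List Λ) (n : ℕ) :
    IsClosed {x : ℕ → Λ | OccursAt w x n} := by
  simp only [OccursAt, Set.ofPred_forall]
  exact isClosed_iInter fun i => isClosed_iInter fun _ =>
    isClosed_singleton.preimage (continuous_apply (n + i))

lemma isClosed_follower {X : Set (ℕ → Λ)} (hX : IsClosed X) (α : List Λ) :
    IsClosed (follower X α) :=
  hX.inter (hX.preimage (continuous_cat α))

lemma IsSFT.exists_isOpen_follower_eq [T1Space Λ] {X : Set (ℕ → Λ)} (h : IsSFT X) (α : List Λ) :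
    ∃ U : Set (ℕ → Λ), IsOpen U ∧ follower X α = U ∩ X := by
  obtain ⟨F, hF, rfl⟩ := h
  refine ⟨_, ?_, follower_forbidSpace F α⟩
  exact hF.isOpen_biInter fun w _ => isOpen_biInter_finset fun n _ =>
    ((isClosed_setOf_occursAt w n).preimage (continuous_cat α)).isOpen_compl

lemma exists_isOpen_image_shiftMap_eq {X : Set (ℕ → Λ)} (hS : Set.MapsTo shiftMap X X)
    (h : ∀ a : Λ, ∃ U : Set (ℕ → Λ), IsOpen U ∧ follower X [a] = U ∩ X)
    {U : Set (ℕ → Λ)} (hU : IsOpen U) :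
    ∃ V : Set (ℕ → Λ), IsOpen V ∧ shiftMap '' (U ∩ X) = V ∩ X := by
  choose W hW hWX using h
  refine ⟨⋃ a, W a ∩ cat [a] ⁻¹' U,
    isOpen_iUnion fun a => (hW a).inter (hU.preimage (continuous_cat _)), ?_⟩
  simp only [image_shiftMap_inter hS, hWX, Set.iUnion_inter, Set.inter_right_comm]

lemma exists_isOpen_follower_eq_of_isOpenMap [DiscreteTopology Λ] {X : Set (ℕ → Λ)}
    (hS : Set.MapsTo shiftMap X X)
    (h : ∀ U : Set (ℕ → Λ), IsOpen U →
      ∃ V : Set (ℕ → Λ), IsOpen V ∧ shiftMap '' (U ∩ X) = V ∩ X) (a : Λ) :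
    ∃ U : Set (ℕ → Λ), IsOpen U ∧ follower X [a] = U ∩ X := by
  rw [follower_singleton_eq_image hS]
  have hZ : IsOpen ((fun x : ℕ → Λ => x 0) ⁻¹' {a}) :=
    (isOpen_discrete {a}).preimage (continuous_apply 0)
  exact h _ hZ

end Topology

def FollowersDeterminedByPrefix {Λ : Type} (X : Set (ℕ → Λ)) (N : ℕ) : Prop :=
  ∀ a : Λ, ∀ y ∈ follower X [a], ∀ z ∈ X, z ∈ PiNat.cylinder y N → z ∈ follower X [a]

section FiniteType

variable {Λ : Type}

lemma cat_singleton_mem {X : Set (ℕ → Λ)} {N : ℕ} (hS : Set.MapsTo shiftMap X X)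
    (hN : FollowersDeterminedByPrefix X N) {x y : ℕ → Λ} (hx : x ∈ X) (hy : y ∈ X)
    (hxy : y ∈ PiNat.cylinder (shiftMap x) N) : cat [x 0] y ∈ X := by
  have hx' : shiftMap x ∈ follower X [x 0] := ⟨hS hx, by rwa [cat_singleton_shiftMap]⟩
  exact (hN _ _ hx' y hy hxy).2

lemma exists_mem_cylinder_tail_of_mem_forbidSpace {X : Set (ℕ → Λ)}
    (hS : Set.MapsTo shiftMap X X) {m : ℕ} {x : ℕ → Λ}
    (hx : x ∈ ForbidSpace {w : List Λ | w.length = m ∧ w ∉ Language X}) (j : ℕ) :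
    ∃ z ∈ X, z ∈ PiNat.cylinder (tail x j) m := by
  set w := List.ofFn fun i : Fin m => x (j + i)
  have hw : w ∈ Language X := by
    by_contra hw
    exact hx w ⟨List.length_ofFn, hw⟩ ⟨j, fun i hi => by simp [w]⟩
  obtain ⟨z, hz, n, hzw⟩ := hw
  refine ⟨tail z n, tail_mem hS hz n, fun i hi => ?_⟩
  have hzi := hzw i (by simpa [w] using hi)
  rwa [List.getElem_ofFn] at hzi

variable [TopologicalSpace Λ] [DiscreteTopology Λ]

lemma eventually_forall_mem_of_mem_cylinder {X U V : Set (ℕ → Λ)} (hX : IsCompact X)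
    (hU : IsOpen U) (hVU : V = U ∩ X) (hV : IsClosed V) :
    ∀ᶠ n in Filter.atTop, ∀ y ∈ V, ∀ z ∈ X, z ∈ PiNat.cylinder y n → z ∈ V := by
  -- a metric inducing the product topology, in which cylinders of length `n` are `(1/2)^n`-balls
  let _ := PiNat.metricSpace (E := fun _ : ℕ => Λ)
  obtain ⟨δ, hδ, hball⟩ := lebesgue_number_lemma_of_metric hX
    (c := fun b : Bool => if b then U else Vᶜ) (fun b => by cases b; exacts [hV.isOpen_compl, hU])
    (fun x hx => by
      by_cases hxU : x ∈ U
      · exact Set.mem_iUnion.2 ⟨true, hxU⟩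
      · exact Set.mem_iUnion.2 ⟨false, fun hxV => hxU (hVU ▸ hxV).1⟩)
  obtain ⟨N, hN⟩ := exists_pow_lt_of_lt_one hδ one_half_lt_one
  refine Filter.eventually_atTop.2 ⟨N, fun n hn y hy z hz hzy => ?_⟩
  have hzδ : z ∈ Metric.ball y δ := (PiNat.mem_cylinder_iff_dist_le.1 hzy).trans_lt
    ((pow_le_pow_of_le_one (by norm_num) (by norm_num) hn).trans_lt hN)
  obtain ⟨b, hb⟩ := hball y (hVU ▸ hy).2
  cases b
  · exact absurd hy (hb (Metric.mem_ball_self hδ))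
  · rw [hVU]
    exact ⟨hb hzδ, hz⟩

lemma exists_followersDeterminedByPrefix [Finite Λ] {X : Set (ℕ → Λ)} (hX : IsClosed X)
    (h : ∀ a : Λ, ∃ U : Set (ℕ → Λ), IsOpen U ∧ follower X [a] = U ∩ X) :
    ∃ N, FollowersDeterminedByPrefix X N :=
  (Filter.eventually_all.2 fun a =>
    let ⟨_, hU, hFU⟩ := h a
    eventually_forall_mem_of_mem_cylinder hX.isCompact hU hFU (isClosed_follower hX [a])).exists

lemma mem_of_forall_exists_mem_cylinder_tail {X : Set (ℕ → Λ)} (hS : Set.MapsTo shiftMap X X)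
    (hX : IsClosed X) {N : ℕ} (hN : FollowersDeterminedByPrefix X N) {x : ℕ → Λ}
    (hx : ∀ j, ∃ z ∈ X, z ∈ PiNat.cylinder (tail x j) (N + 1)) : x ∈ X := by
  have hext : ∀ n, N + 1 ≤ n → ∀ j, ∃ v ∈ X, v ∈ PiNat.cylinder (tail x j) n := by
    intro n hn
    induction n, hn using Nat.le_induction with
    | base => exact hx
    | succ n hn ih =>
      intro j
      obtain ⟨z, hz, hzx⟩ := hx j
      obtain ⟨v, hv, hvx⟩ := ih (j + 1)
      refine ⟨cat [z 0] v, cat_singleton_mem hS hN hz hv fun i hi => ?_, fun i hi => ?_⟩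
      · rw [hvx i (by omega), shiftMap, hzx (i + 1) (by omega)]
        simp only [tail]
        congr 1
        omega
      · cases i with
        | zero => exact hzx 0 (by omega)
        | succ i =>
          rw [cat_singleton_succ, hvx i (by omega)]
          simp only [tail]
          congr 1
          omega
  by_contra hxX
  obtain ⟨n, hn⟩ := PiNat.exists_disjoint_cylinder hX hxX
  obtain ⟨v, hv, hvx⟩ := hext (max n (N + 1)) (le_max_right _ _) 0
  rw [tail_zero] at hvx
  exact Set.disjoint_left.1 hn hv (PiNat.cylinder_anti x (le_max_left _ _) hvx)

theorem isSFT_of_follower_open [Finite Λ] {X : Set (ℕ → Λ)} (hX : IsSubshift X)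
    (h : ∀ a : Λ, ∃ U : Set (ℕ → Λ), IsOpen U ∧ follower X [a] = U ∩ X) : IsSFT X := by
  obtain ⟨N, hN⟩ := exists_followersDeterminedByPrefix hX.2.1 h
  refine ⟨{w | w.length = N + 1 ∧ w ∉ Language X},
    (List.finite_length_eq Λ (N + 1)).subset fun w hw => hw.1, ?_⟩
  refine subset_antisymm (fun x hx w hw hocc => hw.2 ⟨x, hx, hocc⟩) fun x hx => ?_
  exact mem_of_forall_exists_mem_cylinder_tail hX.2.2 hX.2.1 hN
    (exists_mem_cylinder_tail_of_mem_forbidSpace hX.2.2 hx)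

end FiniteType

theorem follower_open_tfae_general {Λ : Type} [Fintype Λ]
    [TopologicalSpace Λ] [DiscreteTopology Λ]
    (X : Set (ℕ → Λ)) (hX : IsSubshift X) :
    List.TFAE
      [∀ α : List Λ, ∃ U : Set (ℕ → Λ), IsOpen U ∧ follower X α = U ∩ X,
       ∀ a : Λ, ∃ U : Set (ℕ → Λ), IsOpen U ∧ follower X [a] = U ∩ X,
       ∀ U : Set (ℕ → Λ), IsOpen U →
         ∃ V : Set (ℕ → Λ), IsOpen V ∧ shiftMap '' (U ∩ X) = V ∩ X,
       IsSFT X] := by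
  tfae_have 1 → 2 := fun h a => h [a]
  tfae_have 2 → 3 := fun h _ hU => exists_isOpen_image_shiftMap_eq hX.2.2 h hU
  tfae_have 3 → 2 := exists_isOpen_follower_eq_of_isOpenMap hX.2.2
  tfae_have 2 → 4 := isSFT_of_follower_open hX
  tfae_have 4 → 1 := IsSFT.exists_isOpen_follower_eq
  tfae_finish

/-- For a subshift `X` over a finite alphabet, the following are equivalent:
(i) every follower set `F_α` is open in `X`; (ii) `F_a` is open in `X` for each letter `a`;
(iii) the shift is an open map on `X`; (iv) `X` is a subshift of finite type. -/
theorem follower_open_tfae {Λ : Type} [Fintype Λ] [Nonempty Λ]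
    [TopologicalSpace Λ] [DiscreteTopology Λ]
    (X : Set (ℕ → Λ)) (hX : IsSubshift X) :
    List.TFAE
      [∀ α : List Λ, ∃ U : Set (ℕ → Λ), IsOpen U ∧ follower X α = U ∩ X,
       ∀ a : Λ, ∃ U : Set (ℕ → Λ), IsOpen U ∧ follower X [a] = U ∩ X,
       ∀ U : Set (ℕ → Λ), IsOpen U →
         ∃ V : Set (ℕ → Λ), IsOpen V ∧ shiftMap '' (U ∩ X) = V ∩ X,
       IsSFT X] :=
  follower_open_tfae_general X hX

end SubshiftPaper
end

section
/- Let X be the even shift. Then every circuit γ relative to X has a strong exit. -/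
open scoped Classical

namespace SubshiftPaper

variable {Λ : Type}

lemma rep_length (n : ℕ) (γ : List Λ) : (rep n γ).length = n * γ.length := by
  induction n with
  | zero => simp [rep]
  | succ n ih => simp [rep, ih]; ring

lemma rep_getD (γ : List Λ) (hγ : γ ≠ []) (d : Λ) :
    ∀ (n : ℕ) (i : ℕ), i < n * γ.length →
      (rep n γ).getD i d = γ.getD (i % γ.length) d := by
  intro n
  induction n with
  | zero => intro i hi; simp at hi
  | succ n ih =>
    intro i hi
    have hlen : 0 < γ.length := List.length_pos_iff.mpr hγ
    by_cases h : i < γ.length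
    · rw [rep, List.getD_append _ _ _ _ h, Nat.mod_eq_of_lt h]
    · push_neg at h
      have h1 : i - γ.length < n * γ.length := by
        have : (n + 1) * γ.length = n * γ.length + γ.length := by ring
        omega
      rw [rep, List.getD_append_right _ _ _ _ h, ih _ h1,
        Nat.mod_eq_sub_mod h]

lemma fw_len (m : ℕ) :
    ((0 : Fin 2) :: (List.replicate (2 * m + 1) (1 : Fin 2) ++ [0])).length
      = 2 * m + 3 := by
  simp

lemma fw_zero (m : ℕ) (h : 0 < ((0 : Fin 2) :: (List.replicate (2 * m + 1) (1 : Fin 2) ++ [0])).length) :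
    ((0 : Fin 2) :: (List.replicate (2 * m + 1) (1 : Fin 2) ++ [0]))[0] = 0 := rfl

lemma fw_one (m : ℕ) (h : 1 < ((0 : Fin 2) :: (List.replicate (2 * m + 1) (1 : Fin 2) ++ [0])).length) :
    ((0 : Fin 2) :: (List.replicate (2 * m + 1) (1 : Fin 2) ++ [0]))[1] = 1 := by
  simp [List.getElem_append]

lemma fw_last (m : ℕ) (h : 2 * m + 2 < ((0 : Fin 2) :: (List.replicate (2 * m + 1) (1 : Fin 2) ++ [0])).length) :
    ((0 : Fin 2) :: (List.replicate (2 * m + 1) (1 : Fin 2) ++ [0]))[2 * m + 2] = 0 := by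
  have : (2 * m + 2) = (2 * m + 1) + 1 := by ring
  simp only [this, List.getElem_cons_succ]
  rw [List.getElem_append_right (by simp)]
  simp

/-- every circuit of the even shift has a strong exit. -/
theorem evenShift_circuit_has_strong_exit (γ : List (Fin 2))
    (hγ : IsCircuit evenShift γ) :
    ∃ z : ℕ → Fin 2, IsStrongExit evenShift γ z := by
  obtain ⟨hne, hmem⟩ := hγ
  have hlen : 0 < γ.length := List.length_pos_iff.mpr hne
  by_cases hall : ∃ k, ∃ hk : k < γ.length, γ[k] = 0
  · -- γ contains a 0 at position k
    obtain ⟨k, hk, hk0⟩ := hall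
    set z : ℕ → Fin 2 := cat (γ.take (k + 1)) (fun _ => 1) with hz
    have htl : (γ.take (k + 1)).length = k + 1 := by
      simp [List.length_take]; omega
    have hztail : ∀ j, k + 1 ≤ j → z j = 1 := by
      intro j hj
      simp only [hz, cat]
      rw [List.getD_eq_default _ _ (by omega)]
    have hzpre : ∀ j, j < k + 1 → z j = γ.getD j 1 := by
      intro j hj
      simp only [hz, cat]
      rw [List.getD_eq_getElem _ _ (by omega), List.getD_eq_getElem _ _ (by omega)]
      simp [List.getElem_take]
    refine ⟨z, ?_, ?_⟩
    · intro hcontra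
      have h1 : z (k + γ.length) = 1 := hztail _ (by omega)
      have h2 : perInf γ (k + γ.length) = 0 := by
        simp only [perInf, Nat.add_mod_right, Nat.mod_eq_of_lt hk]
        rw [List.getD_eq_getElem _ _ hk]; exact hk0
      rw [hcontra, h2] at h1
      exact absurd h1 (by decide)
    · intro n
      set w : ℕ → Fin 2 := cat (rep n γ) z with hw
      set L : ℕ := n * γ.length + (k + 1) with hL
      have hwpre : ∀ i, i < L → w i = perInf γ i := by
        intro i hi
        by_cases h : i < n * γ.length
        · simp only [hw, cat]
          rw [List.getD_eq_getElem _ _ (by rw [rep_length]; exact h)]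
          rw [← List.getD_eq_getElem _ (z (i - (rep n γ).length)),
            rep_getD γ hne _ n i h]
          simp only [perInf]
          have hmod : i % γ.length < γ.length := Nat.mod_lt _ hlen
          rw [List.getD_eq_getElem _ _ hmod, List.getD_eq_getElem _ _ hmod]
        · push_neg at h
          simp only [hw, cat]
          rw [List.getD_eq_default _ _ (by rw [rep_length]; exact h), rep_length]
          have hj : i - n * γ.length < k + 1 := by omega
          rw [hzpre _ hj]
          simp only [perInf]
          have : i % γ.length = i - n * γ.length := by
            have h2 : i = n * γ.length + (i - n * γ.length) := by omega
            conv_lhs => rw [h2]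
            rw [Nat.add_comm, Nat.add_mul_mod_self_right, Nat.mod_eq_of_lt (by omega)]
          rw [this]
          rw [List.getD_eq_getElem _ _ (by omega), List.getD_eq_getElem _ _ (by omega)]
      have hwtail : ∀ i, L ≤ i → w i = 1 := by
        intro i hi
        simp only [hw, cat]
        rw [List.getD_eq_default _ _ (by rw [rep_length]; omega), rep_length]
        exact hztail _ (by omega)
      intro α hα hocc
      obtain ⟨m, rfl⟩ := hα
      obtain ⟨p, hp⟩ := hocc
      have hlast : w (p + (2 * m + 2)) = 0 := by
        have := hp (2 * m + 2) (by rw [fw_len]; omega)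
        rwa [fw_last] at this
      by_cases hcase : p + (2 * m + 2) < L
      · apply hmem _ ⟨m, rfl⟩
        refine ⟨p, fun i hi => ?_⟩
        have hiL : p + i < L := by rw [fw_len] at hi; omega
        rw [← hwpre _ hiL]
        exact hp i hi
      · push_neg at hcase
        rw [hwtail _ hcase] at hlast
        exact absurd hlast (by decide)
  · -- γ is all ones
    push_neg at hall
    have hone : ∀ k (hk : k < γ.length), γ[k] = 1 := by
      intro k hk
      have := hall k hk
      omega
    refine ⟨fun _ => 0, ?_, ?_⟩
    · intro hcontra
      have h2 : perInf γ 0 = 1 := by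
        simp only [perInf, Nat.zero_mod]
        rw [List.getD_eq_getElem _ _ hlen]
        exact hone 0 hlen
      have h1 : (fun _ => (0 : Fin 2)) 0 = 0 := rfl
      rw [hcontra, h2] at h1
      exact absurd h1 (by decide)
    · intro n
      set w : ℕ → Fin 2 := cat (rep n γ) (fun _ => 0) with hw
      have hwpre : ∀ i, i < n * γ.length → w i = 1 := by
        intro i hi
        simp only [hw, cat]
        rw [List.getD_eq_getElem _ _ (by rw [rep_length]; exact hi),
          ← List.getD_eq_getElem _ (1 : Fin 2), rep_getD γ hne _ n i hi]
        have hmod : i % γ.length < γ.length := Nat.mod_lt _ hlen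
        rw [List.getD_eq_getElem _ _ hmod]
        exact hone _ hmod
      have hwtail : ∀ i, n * γ.length ≤ i → w i = 0 := by
        intro i hi
        simp only [hw, cat]
        rw [List.getD_eq_default _ _ (by rw [rep_length]; exact hi)]
      intro α hα hocc
      obtain ⟨m, rfl⟩ := hα
      obtain ⟨p, hp⟩ := hocc
      by_cases hcase : p < n * γ.length
      · have h0 : w p = 0 := by
          have := hp 0 (by rw [fw_len]; omega)
          rwa [fw_zero] at this
        rw [hwpre _ hcase] at h0
        exact absurd h0 (by decide)
      · push_neg at hcase
        have h1 : w (p + 1) = 1 := by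
          have := hp 1 (by rw [fw_len]; omega)
          rwa [fw_one] at this
        rw [hwtail _ (by omega)] at h1
        exact absurd h1 (by decide)

end SubshiftPaper
end

section
/- Let X be a subshift over a finite alphabet Λ. The stem map σ : Ω_X → X is continuous (where Ω_X carries the subspace topology from 2^𝔽 and X the subspace topology from Λ^ℕ). -/
open scoped Classical

namespace SubshiftPaper

variable {Λ : Type}

lemma wd_eq_mk (α : List Λ) : wd α = FreeGroup.mk (α.map fun a => (a, true)) := by
  induction α with
  | nil => rfl
  | cons a l ih =>
    simp only [wd, List.map_cons, List.prod_cons] at *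
    rw [ih, FreeGroup.of, FreeGroup.mul_mk]
    rfl

lemma reduce_map_true (α : List Λ) :
    FreeGroup.reduce (α.map fun a => (a, true)) = α.map fun a => (a, true) := by
  induction α with
  | nil => rfl
  | cons a l ih =>
    rw [List.map_cons, FreeGroup.reduce.cons, ih]
    cases hl : l.map (fun a => (a, true)) with
    | nil => rfl
    | cons b m =>
      have hb : b.2 = true := by
        cases l with
        | nil => simp at hl
        | cons c l' =>
          simp only [List.map_cons, List.cons.injEq] at hl
          rw [← hl.1]
      simp [hb]

lemma wd_injective : Function.Injective (wd : List Λ → FreeGroup Λ) := by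
  intro α β h
  have h2 : FreeGroup.toWord (wd α) = FreeGroup.toWord (wd β) := by rw [h]
  rw [wd_eq_mk, wd_eq_mk, FreeGroup.toWord_mk, FreeGroup.toWord_mk,
    reduce_map_true, reduce_map_true] at h2
  exact List.map_injective_iff.2 (fun a b hab => congrArg Prod.fst hab) h2

/-- the stem map `σ : Ω_X → X` is continuous. -/
theorem stem_continuousOn {Λ : Type} [Fintype Λ] [Nonempty Λ] [DecidableEq Λ]
    [TopologicalSpace Λ] [DiscreteTopology Λ]
    (X : Set (ℕ → Λ)) (hX : IsSubshift X)
    (σ : (FreeGroup Λ → Bool) → (ℕ → Λ))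
    (hσ : ∀ ξ ∈ Omega X, σ ξ ∈ X ∧ IsStem ξ (σ ξ)) :
    ContinuousOn σ (Omega X) := by
  rw [continuousOn_pi]
  intro n ξ hξ
  have hpref : Pref (List.ofFn fun i : Fin (n + 1) => σ ξ i) (σ ξ) := by
    intro i h
    rw [List.getElem_ofFn]
  set α : List Λ := List.ofFn fun i : Fin (n + 1) => σ ξ i with hα
  have hlen : α.length = n + 1 := by simp [hα]
  have hξtrue : ξ (wd α) = true := by
    have hmem : wd α ∈ {g | ∃ β : List Λ, g = wd β ∧ Pref β (σ ξ)} := ⟨α, rfl, hpref⟩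
    rw [← (hσ ξ hξ).2] at hmem
    exact hmem.1
  have hev : ∀ᶠ η in nhdsWithin ξ (Omega X), σ η n = σ ξ n := by
    rw [Filter.eventually_iff, mem_nhdsWithin]
    refine ⟨{η : FreeGroup Λ → Bool | η (wd α) = true}, ?_, hξtrue, ?_⟩
    · have heq : {η : FreeGroup Λ → Bool | η (wd α) = true}
          = (fun η : FreeGroup Λ → Bool => η (wd α)) ⁻¹' {true} := rfl
      rw [heq]
      exact (continuous_apply (wd α)).isOpen_preimage _ (isOpen_discrete _)
    · rintro η ⟨hη1, hη2⟩
      have hst := (hσ η hη2).2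
      have hmem : wd α ∈ ({g | η g = true} ∩ {g | ∃ β : List Λ, g = wd β}) :=
        ⟨hη1, α, rfl⟩
      rw [hst] at hmem
      obtain ⟨β, hβ, hprefβ⟩ := hmem
      have hαβ : α = β := wd_injective hβ
      subst hαβ
      have h1 : σ η n = α[n]'(by omega) := hprefβ n (by omega)
      have h2 : σ ξ n = α[n]'(by omega) := hpref n (by omega)
      show σ η n = σ ξ n
      rw [h1, h2]
  exact Filter.Tendsto.congr' (hev.mono fun η h => h.symm) tendsto_const_nhds

end SubshiftPaper
end
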